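/- arXiv:2206.10676 — 6 statements merged into one kernel-verified Lean document; each statement's English description precedes it below -/
import Mathlib

section
/- Let P be a probability tensor on ∏_{m∈Fin M} Fin(c m). Then P is rank-one (i.e., there exist real-valued functions p_m : Fin(c m) → ℝ with P j = ∏_{m} p_m(j m) for all index tuples j) if and only if P factorizes through its own marginals, i.e., P j = ∏_{m} q_m(j m) for all tuples j, where q_m is the m-th marginal of P. In particular, a rank-one probability tensor always admits a rank-one factorization whose factors are the (nonnegative, sum-to-one) marginal probability vectors. -/
/-- A probability tensor `P` on `∏ m, Fin (c m)` is rank-one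
(factors as a product of real-valued functions `p m`) if and only if it
factorizes through its own marginals `q m a = ∑_{j : j m = a} P j`. -/
theorem rank_one_iff_factors_through_marginals
    (M : ℕ) (hM : 1 ≤ M) (c : Fin M → ℕ) (hc : ∀ m, 1 ≤ c m)
    (P : (∀ m : Fin M, Fin (c m)) → ℝ)
    (hP0 : ∀ j, 0 ≤ P j)
    (hP1 : ∑ j : ∀ m : Fin M, Fin (c m), P j = 1) :
    (∃ p : ∀ m : Fin M, Fin (c m) → ℝ, ∀ j : ∀ m : Fin M, Fin (c m),
        P j = ∏ m, p m (j m)) ↔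
    (∀ j : ∀ m : Fin M, Fin (c m),
        P j = ∏ m,
          (∑ j' ∈ Finset.univ.filter
              (fun j' : ∀ m' : Fin M, Fin (c m') => j' m = j m), P j')) := by
  constructor
  · rintro ⟨p, hp⟩
    set S : Fin M → ℝ := fun m => ∑ a, p m a with hSdef
    have hS1 : ∏ m, S m = 1 := by
      have h := Finset.prod_univ_sum (fun m : Fin M => (Finset.univ : Finset (Fin (c m))))
        (fun m a => p m a)
      rw [Fintype.piFinset_univ] at h
      rw [hSdef]
      simp only
      rw [h, ← hP1]
      exact Finset.sum_congr rfl fun j _ => (hp j).symm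
    have hSne : ∀ m, S m ≠ 0 := by
      intro m hm
      have := Finset.prod_eq_zero (Finset.mem_univ m) hm
      rw [hS1] at this
      exact one_ne_zero this
    have key : ∀ (m : Fin M) (a : Fin (c m)),
        (∑ j' ∈ Finset.univ.filter
            (fun j' : ∀ m' : Fin M, Fin (c m') => j' m = a), P j')
          = p m a * (S m)⁻¹ := by
      intro m a
      -- auxiliary factors
      set g : ∀ m' : Fin M, Fin (c m') → ℝ := fun m' b =>
        if h : m' = m then (if b = Fin.cast (congrArg c h.symm) a then p m' b else 0)
        else p m' b with hgdef
      have hg : ∀ j' : ∀ m' : Fin M, Fin (c m'),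
          (∏ m', g m' (j' m')) = if j' m = a then P j' else 0 := by
        intro j'
        by_cases hja : j' m = a
        · rw [if_pos hja, hp j']
          refine Finset.prod_congr rfl fun m' _ => ?_
          by_cases h' : m' = m
          · subst h'
            simp [hgdef, hja]
          · simp [hgdef, h']
        · rw [if_neg hja]
          refine Finset.prod_eq_zero (Finset.mem_univ m) ?_
          simp [hgdef, hja]
      have hsum : (∑ j' : ∀ m' : Fin M, Fin (c m'), ∏ m', g m' (j' m'))
          = ∏ m', ∑ b, g m' b := by
        have h := Finset.prod_univ_sum (fun m' : Fin M => (Finset.univ : Finset (Fin (c m'))))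
          (fun m' b => g m' b)
        rw [Fintype.piFinset_univ] at h
        exact h.symm
      have hgm : (∑ b, g m b) = p m a := by
        simp [hgdef]
      have hgm' : ∀ m', m' ≠ m → (∑ b, g m' b) = S m' := by
        intro m' hm'
        simp [hgdef, hm', hSdef]
      have hErase : (∏ m' ∈ Finset.univ.erase m, S m') = (S m)⁻¹ := by
        have := Finset.mul_prod_erase Finset.univ S (Finset.mem_univ m)
        rw [hS1] at this
        rw [inv_eq_one_div, eq_div_iff (hSne m)]
        linear_combination this
      calc (∑ j' ∈ Finset.univ.filter
            (fun j' : ∀ m' : Fin M, Fin (c m') => j' m = a), P j')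
          = ∑ j' : ∀ m' : Fin M, Fin (c m'), if j' m = a then P j' else 0 := by
            rw [Finset.sum_filter]
        _ = ∑ j' : ∀ m' : Fin M, Fin (c m'), ∏ m', g m' (j' m') := by
            exact Finset.sum_congr rfl fun j' _ => (hg j').symm
        _ = ∏ m', ∑ b, g m' b := hsum
        _ = (∑ b, g m b) * ∏ m' ∈ Finset.univ.erase m, ∑ b, g m' b :=
            (Finset.mul_prod_erase Finset.univ _ (Finset.mem_univ m)).symm
        _ = p m a * (S m)⁻¹ := by
            rw [hgm, ← hErase]
            congr 1
            exact Finset.prod_congr rfl fun m' hm' =>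
              hgm' m' (Finset.ne_of_mem_erase hm')
    intro j
    have : (∏ m, (∑ j' ∈ Finset.univ.filter
        (fun j' : ∀ m' : Fin M, Fin (c m') => j' m = j m), P j'))
        = ∏ m, p m (j m) * (S m)⁻¹ :=
      Finset.prod_congr rfl fun m _ => key m (j m)
    rw [this, Finset.prod_mul_distrib, Finset.prod_inv_distrib, hS1, hp j]
    simp
  · intro h
    exact ⟨fun m a => ∑ j' ∈ Finset.univ.filter
      (fun j' : ∀ m' : Fin M, Fin (c m') => j' m = a), P j', h⟩
end

section
/- Every probability tensor P on ∏_{m∈Fin M} Fin(c m) (with M ≥ 1) admits a decomposition P j = Σ_{r∈Fin R} δ_r · ∏_{m} p_{m r}(j m) for all index tuples j, for some R ≥ 1 satisfying R · (max_{k∈Fin M} c k) ≤ ∏_{m} c m, where δ_r > 0 for all r with Σ_r δ_r = 1, and each p_{m r} : Fin(c m) → ℝ satisfies p_{m r}(a) ≥ 0 for all a and Σ_a p_{m r}(a) = 1. -/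
open Classical in
/-- Auxiliary probability vector family used in the decomposition. -/
noncomputable def probTensorAuxP {M : ℕ} (c : Fin M → ℕ) (m₀ : Fin M)
    (g : Fin (c m₀) → ℝ) (s : ∀ m : {m : Fin M // m ≠ m₀}, Fin (c m.1)) :
    ∀ m : Fin M, Fin (c m) → ℝ :=
  fun m a => if h : m = m₀ then g (Fin.cast (congrArg c h) a)
    else if s ⟨m, h⟩ = a then 1 else 0

theorem probTensorAuxP_self {M : ℕ} (c : Fin M → ℕ) (m₀ : Fin M)
    (g : Fin (c m₀) → ℝ) (s : ∀ m : {m : Fin M // m ≠ m₀}, Fin (c m.1))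
    (a : Fin (c m₀)) : probTensorAuxP c m₀ g s m₀ a = g a := by
  rw [probTensorAuxP, dif_pos rfl]
  exact congrArg g (Fin.ext rfl)

theorem probTensorAuxP_ne {M : ℕ} (c : Fin M → ℕ) (m₀ : Fin M)
    (g : Fin (c m₀) → ℝ) (s : ∀ m : {m : Fin M // m ≠ m₀}, Fin (c m.1))
    (m : Fin M) (h : m ≠ m₀) (a : Fin (c m)) :
    probTensorAuxP c m₀ g s m a = if s ⟨m, h⟩ = a then 1 else 0 := by
  rw [probTensorAuxP, dif_neg h]

/-- Splitting a product over `Fin M` at one index. -/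
theorem prod_split_at {M : ℕ} {β : Type*} [CommMonoid β] (m₀ : Fin M) (g : Fin M → β) :
    ∏ m, g m = g m₀ * ∏ m : {m : Fin M // m ≠ m₀}, g m.1 := by
  rw [← Finset.prod_subtype (Finset.univ.erase m₀) (fun x => by simp) g,
    Finset.mul_prod_erase _ _ (Finset.mem_univ m₀)]

set_option maxHeartbeats 1000000 in
/-- Every probability tensor on `∏ m, Fin (c m)` (with `M ≥ 1`)
admits a rank-`R` decomposition into a convex combination (with strictly
positive weights) of products of nonnegative sum-to-one probability vectors,
for some `R ≥ 1` with `R * max_k c k ≤ ∏ m, c m`. -/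
theorem prob_tensor_exists_rank_decomposition
    (M : ℕ) (hM : 1 ≤ M) (c : Fin M → ℕ) (hc : ∀ m, 1 ≤ c m)
    (P : (∀ m : Fin M, Fin (c m)) → ℝ)
    (hP0 : ∀ j, 0 ≤ P j)
    (hP1 : ∑ j : ∀ m : Fin M, Fin (c m), P j = 1) :
    ∃ (R : ℕ) (_ : 1 ≤ R) (δ : Fin R → ℝ)
      (p : ∀ m : Fin M, Fin R → Fin (c m) → ℝ),
      R * Finset.univ.sup c ≤ ∏ m, c m ∧
      (∀ r, 0 < δ r) ∧ (∑ r, δ r = 1) ∧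
      (∀ m r a, 0 ≤ p m r a) ∧
      (∀ m r, ∑ a, p m r a = 1) ∧
      (∀ j : ∀ m : Fin M, Fin (c m), P j = ∑ r, δ r * ∏ m, p m r (j m)) := by
  classical
  have hne : Nonempty (Fin M) := ⟨⟨0, hM⟩⟩
  obtain ⟨m₀, -, hm₀⟩ := Finset.exists_mem_eq_sup (Finset.univ : Finset (Fin M))
    Finset.univ_nonempty c
  set T := (∀ m : {m : Fin M // m ≠ m₀}, Fin (c m.1)) with hT
  let φ : (∀ m : Fin M, Fin (c m)) ≃ Fin (c m₀) × T :=
    Equiv.piSplitAt m₀ (fun m => Fin (c m))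
  set Q : Fin (c m₀) → T → ℝ := fun a s => P (φ.symm (a, s)) with hQ
  have hQ0 : ∀ a s, 0 ≤ Q a s := fun a s => hP0 _
  set δ' : T → ℝ := fun s => ∑ a, Q a s with hδ'
  have hδ'0 : ∀ s, 0 ≤ δ' s := fun s => Finset.sum_nonneg fun a _ => hQ0 a s
  have hsum : ∑ s : T, δ' s = 1 := by
    have h1 : ∑ x : Fin (c m₀) × T, P (φ.symm x) = 1 := by
      rw [Equiv.sum_comp φ.symm P]; exact hP1
    rw [Fintype.sum_prod_type] at h1
    rw [← h1, Finset.sum_comm]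
  set S : Finset T := Finset.univ.filter (fun s => 0 < δ' s) with hS
  have hδ'S : ∀ s ∈ S, 0 < δ' s := fun s hs => (Finset.mem_filter.mp hs).2
  have hδ'nS : ∀ s : T, s ∉ S → δ' s = 0 := by
    intro s hs
    by_contra h
    exact hs (Finset.mem_filter.mpr ⟨Finset.mem_univ s,
      lt_of_le_of_ne (hδ'0 s) (Ne.symm h)⟩)
  have hSne : S.Nonempty := by
    by_contra h
    rw [Finset.not_nonempty_iff_eq_empty] at h
    have : ∑ s : T, δ' s = 0 :=
      Finset.sum_eq_zero fun s _ => hδ'nS s (by simp [h])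
    rw [this] at hsum; norm_num at hsum
  let e : Fin S.card → {x // x ∈ S} := S.equivFin.symm
  refine ⟨S.card, hSne.card_pos, fun r => δ' (e r),
    fun m r => probTensorAuxP c m₀ (fun a => Q a (e r) / δ' (e r)) (e r) m,
    ?_, ?_, ?_, ?_, ?_, ?_⟩
  · -- cardinality bound
    rw [hm₀]
    have h1 : S.card ≤ ∏ m ∈ Finset.univ.erase m₀, c m := by
      calc S.card ≤ Fintype.card T := by
            simpa using Finset.card_le_univ S
        _ = ∏ m : {m : Fin M // m ≠ m₀}, c m.1 := by
            simp [hT, Fintype.card_pi]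
        _ = ∏ m ∈ Finset.univ.erase m₀, c m :=
            (Finset.prod_subtype (Finset.univ.erase m₀) (fun x => by simp) c).symm
    calc S.card * c m₀ ≤ (∏ m ∈ Finset.univ.erase m₀, c m) * c m₀ :=
          Nat.mul_le_mul_right _ h1
      _ = ∏ m, c m := by
          rw [mul_comm, Finset.mul_prod_erase _ _ (Finset.mem_univ m₀)]
  · exact fun r => hδ'S _ (e r).2
  · calc ∑ r, δ' (e r) = ∑ x : {x // x ∈ S}, δ' x :=
          Equiv.sum_comp S.equivFin.symm (fun x : {x // x ∈ S} => δ' x)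
      _ = ∑ s ∈ S, δ' s := Finset.sum_coe_sort S δ'
      _ = ∑ s : T, δ' s :=
          Finset.sum_subset (Finset.subset_univ S)
            (fun s _ hs => hδ'nS s hs)
      _ = 1 := hsum
  · intro m r a
    dsimp only
    rcases eq_or_ne m m₀ with h | h
    · subst h
      rw [probTensorAuxP_self]
      exact div_nonneg (hQ0 _ _) (hδ'0 _)
    · rw [probTensorAuxP_ne _ _ _ _ _ h]
      split <;> norm_num
  · intro m r
    dsimp only
    rcases eq_or_ne m m₀ with h | h
    · subst h
      rw [Finset.sum_congr rfl fun a _ => probTensorAuxP_self c m _ _ a,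
        ← Finset.sum_div]
      exact div_self (ne_of_gt (hδ'S _ (e r).2))
    · rw [Finset.sum_congr rfl fun a _ => probTensorAuxP_ne c m₀ _ _ m h a,
        Finset.sum_ite_eq]
      simp
  · intro j
    dsimp only
    set sj : T := fun m => j m.1 with hsj
    have hQj : Q (j m₀) sj = P j := by
      have : φ.symm (j m₀, sj) = j := φ.symm_apply_apply j
      rw [hQ]; exact congrArg P this
    have hterm : ∀ r : Fin S.card,
        δ' (e r) * ∏ m, probTensorAuxP c m₀ (fun a => Q a (e r) / δ' (e r)) (e r) m (j m)
          = if (e r : T) = sj then Q (j m₀) (e r) else 0 := by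
      intro r
      rw [prod_split_at m₀, probTensorAuxP_self,
        Finset.prod_congr rfl fun m _ => probTensorAuxP_ne c m₀ _ _ m.1 m.2 (j m.1)]
      have hind : (∏ m : {m : Fin M // m ≠ m₀},
          if (e r : T) m = j m.1 then (1:ℝ) else 0) = if (e r : T) = sj then 1 else 0 := by
        by_cases hss : (e r : T) = sj
        · rw [if_pos hss]
          apply Finset.prod_eq_one
          intro m _
          rw [if_pos]
          rw [hss]
        · rw [if_neg hss]
          obtain ⟨m, hm⟩ := Function.ne_iff.mp hss
          exact Finset.prod_eq_zero (Finset.mem_univ m) (if_neg hm)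
      rw [hind]
      by_cases hss : (e r : T) = sj
      · rw [if_pos hss, if_pos hss, mul_one, mul_div_cancel₀]
        exact ne_of_gt (hδ'S _ (e r).2)
      · rw [if_neg hss, if_neg hss, mul_zero, mul_zero]
    rw [Finset.sum_congr rfl fun r _ => hterm r]
    have : ∑ r : Fin S.card, (if (e r : T) = sj then Q (j m₀) (e r) else 0)
        = ∑ s ∈ S, (if s = sj then Q (j m₀) s else 0) := by
      rw [Equiv.sum_comp S.equivFin.symm
        (fun x : {x // x ∈ S} => if (x : T) = sj then Q (j m₀) x else 0)]
      exact Finset.sum_coe_sort S (fun s => if s = sj then Q (j m₀) s else 0)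
    rw [this, Finset.sum_ite_eq' S sj (fun s => Q (j m₀) s)]
    by_cases hmem : sj ∈ S
    · rw [if_pos hmem, hQj]
    · rw [if_neg hmem, ← hQj]
      have h1 : Q (j m₀) sj ≤ δ' sj :=
        Finset.single_le_sum (f := fun a => Q a sj) (fun a _ => hQ0 a sj)
          (Finset.mem_univ (j m₀))
      have h2 : δ' sj = 0 := hδ'nS sj hmem
      exact le_antisymm (by rw [← h2]; exact h1) (hQ0 _ _)
end

section
/- Let E = EuclideanSpace ℝ (Fin d), fix b₀, g₀ ∈ E, τ > 0 and λ > 0, and set u = b₀ + τ • g₀. Define b* = max(1 − λτ/‖u‖, 0) • u (so b* = 0 when u = 0). Then b* is the unique maximizer over E of the function φ(b) = ⟪g₀, b − b₀⟫ − (2τ)⁻¹‖b − b₀‖² − λ‖b‖; that is, φ(b) ≤ φ(b*) for all b ∈ E, with equality only when b = b*. -/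
set_option maxHeartbeats 1000000

/-- The group soft-thresholding vector
`b* = max (1 - λτ/‖u‖) 0 • u` with `u = b₀ + τ • g₀` is the unique maximizer
over `EuclideanSpace ℝ (Fin d)` of
`φ(b) = ⟪g₀, b - b₀⟫ - (2τ)⁻¹ ‖b - b₀‖² - λ ‖b‖`. -/
theorem group_soft_threshold_unique_maximizer
    (d : ℕ) (b₀ g₀ : EuclideanSpace ℝ (Fin d)) (τ lam : ℝ)
    (hτ : 0 < τ) (hlam : 0 < lam) :
    ∀ b : EuclideanSpace ℝ (Fin d),
      ((inner ℝ g₀ (b - b₀) : ℝ) - (2 * τ)⁻¹ * ‖b - b₀‖ ^ 2 - lam * ‖b‖ ≤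
        (inner ℝ g₀ ((max (1 - lam * τ / ‖b₀ + τ • g₀‖) 0 • (b₀ + τ • g₀)) - b₀) : ℝ)
          - (2 * τ)⁻¹ * ‖(max (1 - lam * τ / ‖b₀ + τ • g₀‖) 0 • (b₀ + τ • g₀)) - b₀‖ ^ 2
          - lam * ‖max (1 - lam * τ / ‖b₀ + τ • g₀‖) 0 • (b₀ + τ • g₀)‖) ∧
      (((inner ℝ g₀ (b - b₀) : ℝ) - (2 * τ)⁻¹ * ‖b - b₀‖ ^ 2 - lam * ‖b‖ =
        (inner ℝ g₀ ((max (1 - lam * τ / ‖b₀ + τ • g₀‖) 0 • (b₀ + τ • g₀)) - b₀) : ℝ)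
          - (2 * τ)⁻¹ * ‖(max (1 - lam * τ / ‖b₀ + τ • g₀‖) 0 • (b₀ + τ • g₀)) - b₀‖ ^ 2
          - lam * ‖max (1 - lam * τ / ‖b₀ + τ • g₀‖) 0 • (b₀ + τ • g₀)‖) →
        b = max (1 - lam * τ / ‖b₀ + τ • g₀‖) 0 • (b₀ + τ • g₀)) := by
  intro b
  set u : EuclideanSpace ℝ (Fin d) := b₀ + τ • g₀ with hu
  set c : ℝ := max (1 - lam * τ / ‖u‖) 0 with hc
  set bs : EuclideanSpace ℝ (Fin d) := c • u with hbs
  set s : EuclideanSpace ℝ (Fin d) := (lam * τ)⁻¹ • (u - bs) with hs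
  have hlt : 0 < lam * τ := mul_pos hlam hτ
  have hAB : (∀ x : EuclideanSpace ℝ (Fin d), (inner ℝ s x : ℝ) ≤ ‖x‖) ∧
      (inner ℝ s bs : ℝ) = ‖bs‖ := by
    by_cases hu0 : u = 0
    · have hbs0 : bs = 0 := by simp [hbs, hu0]
      have hs0 : s = 0 := by simp [hs, hu0, hbs0]
      refine ⟨fun x => ?_, ?_⟩
      · simp [hs0]
      · simp [hs0, hbs0]
    · have hun : 0 < ‖u‖ := norm_pos_iff.2 hu0
      by_cases hcase : ‖u‖ ≤ lam * τ
      · have hc0 : c = 0 := max_eq_right (by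
          have : (1:ℝ) ≤ lam * τ / ‖u‖ := (one_le_div hun).2 hcase
          linarith)
        have hbs0 : bs = 0 := by simp [hbs, hc0]
        have hsu : s = (lam * τ)⁻¹ • u := by simp [hs, hbs0]
        have hns : ‖s‖ ≤ 1 := by
          rw [hsu, norm_smul, norm_inv, Real.norm_eq_abs, abs_of_pos hlt]
          rw [inv_mul_le_iff₀ hlt]; linarith
        refine ⟨fun x => ?_, ?_⟩
        · calc (inner ℝ s x : ℝ) ≤ ‖s‖ * ‖x‖ := real_inner_le_norm s x
            _ ≤ 1 * ‖x‖ := by nlinarith [norm_nonneg x]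
            _ = ‖x‖ := one_mul _
        · simp [hbs0]
      · push_neg at hcase
        have hcpos : 0 < 1 - lam * τ / ‖u‖ := by
          have : lam * τ / ‖u‖ < 1 := (div_lt_one hun).2 hcase
          linarith
        have hc1 : c = 1 - lam * τ / ‖u‖ := max_eq_left hcpos.le
        have hub : u - bs = (lam * τ / ‖u‖) • u := by
          rw [hbs, hc1]
          rw [sub_smul, one_smul] at *
          module
        have hsu : s = ‖u‖⁻¹ • u := by
          rw [hs, hub, smul_smul]
          congr 1
          field_simp
        have hns : ‖s‖ = 1 := by
          rw [hsu, norm_smul, norm_inv, Real.norm_eq_abs, abs_of_pos hun]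
          field_simp
        refine ⟨fun x => ?_, ?_⟩
        · calc (inner ℝ s x : ℝ) ≤ ‖s‖ * ‖x‖ := real_inner_le_norm s x
            _ = ‖x‖ := by rw [hns, one_mul]
        · rw [hsu, hbs, real_inner_smul_left, real_inner_smul_right,
            real_inner_self_eq_norm_sq, norm_smul, Real.norm_eq_abs,
            abs_of_pos (hc1 ▸ hcpos)]
          field_simp
  have hsx : ∀ x : EuclideanSpace ℝ (Fin d),
      (inner ℝ s x : ℝ) = (lam * τ)⁻¹ * (inner ℝ (u - bs) x : ℝ) := fun x => by
    rw [hs, real_inner_smul_left]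
  have key : ((inner ℝ g₀ (bs - b₀) : ℝ) - (2 * τ)⁻¹ * ‖bs - b₀‖ ^ 2 - lam * ‖bs‖)
      - ((inner ℝ g₀ (b - b₀) : ℝ) - (2 * τ)⁻¹ * ‖b - b₀‖ ^ 2 - lam * ‖b‖)
      = (2 * τ)⁻¹ * ‖b - bs‖ ^ 2 + lam * (‖b‖ - (inner ℝ s b : ℝ))
        + lam * ((inner ℝ s bs : ℝ) - ‖bs‖) := by
    rw [hsx b, hsx bs, hu]
    simp only [← real_inner_self_eq_norm_sq, inner_sub_left, inner_sub_right,
      inner_add_left, inner_add_right, real_inner_smul_left, real_inner_smul_right]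
    rw [real_inner_comm b₀ b, real_inner_comm b₀ g₀, real_inner_comm bs b,
      real_inner_comm bs g₀, real_inner_comm bs b₀]
    field_simp
    ring
  have h1 := hAB.1 b
  have h2 := hAB.2
  have hA : 0 ≤ (2 * τ)⁻¹ * ‖b - bs‖ ^ 2 := by positivity
  have hB : 0 ≤ lam * (‖b‖ - (inner ℝ s b : ℝ)) := mul_nonneg hlam.le (by linarith)
  have h2' : lam * ((inner ℝ s bs : ℝ) - ‖bs‖) = 0 := by rw [h2]; ring
  constructor
  · linarith [key]
  · intro heq
    have hz : ‖b - bs‖ ^ 2 ≤ 0 := by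
      have h2τ : 0 < (2 * τ)⁻¹ := by positivity
      nlinarith [key]
    have hn : b - bs = 0 := by
      rw [← norm_eq_zero]
      nlinarith [norm_nonneg (b - bs)]
    exact sub_eq_zero.1 hn
end

section
/- Let E = EuclideanSpace ℝ (Fin d), let τ > 0 and λ ≥ 0, and let f : E → ℝ be differentiable with gradient map f' : E → E (i.e., f has gradient f'(x) at every x ∈ E) satisfying ‖f'(x) − f'(y)‖ ≤ τ⁻¹‖x − y‖ for all x, y ∈ E. Fix b₀ ∈ E, set u = b₀ + τ • f'(b₀) and b⁺ = max(1 − λτ/‖u‖, 0) • u. Then: (i) for all b ∈ E, f(b) ≥ f(b₀) + ⟪f'(b₀), b − b₀⟫ − (2τ)⁻¹‖b − b₀‖², so the function b ↦ f(b₀) + ⟪f'(b₀), b − b₀⟫ − (2τ)⁻¹‖b − b₀‖² − λ‖b‖ minorizes f(b) − λ‖b‖; and (ii) f(b⁺) − λ‖b⁺‖ ≥ f(b₀) − λ‖b₀‖, i.e., the proximal gradient (minorize–maximize) update does not decrease the penalized objective. -/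
theorem descent_lemma_aux
    (d : ℕ) (τ : ℝ) (hτ : 0 < τ)
    (f : EuclideanSpace ℝ (Fin d) → ℝ)
    (f' : EuclideanSpace ℝ (Fin d) → EuclideanSpace ℝ (Fin d))
    (hf : ∀ x, HasGradientAt f (f' x) x)
    (hlip : ∀ x y, ‖f' x - f' y‖ ≤ τ⁻¹ * ‖x - y‖)
    (b₀ b : EuclideanSpace ℝ (Fin d)) :
    f b₀ + (inner ℝ (f' b₀) (b - b₀) : ℝ) - (2 * τ)⁻¹ * ‖b - b₀‖ ^ 2 ≤ f b := by
  set v := b - b₀ with hv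
  set g : ℝ → ℝ := fun t =>
    f (b₀ + t • v) - t * (inner ℝ (f' b₀) v : ℝ) + (2 * τ)⁻¹ * t ^ 2 * ‖v‖ ^ 2 with hg
  have hderiv : ∀ t : ℝ, HasDerivAt g
      ((inner ℝ (f' (b₀ + t • v)) v : ℝ) - (inner ℝ (f' b₀) v : ℝ) + τ⁻¹ * t * ‖v‖ ^ 2) t := by
    intro t
    have hline : HasDerivAt (fun t : ℝ => b₀ + t • v) v t := by
      simpa using ((hasDerivAt_id t).smul_const v).const_add b₀
    have h1 : HasDerivAt (fun t : ℝ => f (b₀ + t • v))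
        ((inner ℝ (f' (b₀ + t • v)) v : ℝ)) t := by
      have := (hf (b₀ + t • v)).hasFDerivAt.comp_hasDerivAt t hline
      exact this
    have h2 : HasDerivAt (fun t : ℝ => t * (inner ℝ (f' b₀) v : ℝ))
        ((inner ℝ (f' b₀) v : ℝ)) t := by
      simpa using (hasDerivAt_id t).mul_const ((inner ℝ (f' b₀) v : ℝ))
    have h3 : HasDerivAt (fun t : ℝ => (2 * τ)⁻¹ * t ^ 2 * ‖v‖ ^ 2)
        (τ⁻¹ * t * ‖v‖ ^ 2) t := by
      have := ((hasDerivAt_pow 2 t).const_mul ((2 * τ)⁻¹)).mul_const (‖v‖ ^ 2)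
      exact this.congr_deriv (by ring)
    exact (h1.sub h2).add h3
  have hmono : MonotoneOn g (Set.Icc (0:ℝ) 1) := by
    apply monotoneOn_of_deriv_nonneg (convex_Icc 0 1)
    · exact fun t _ => (hderiv t).continuousAt.continuousWithinAt
    · exact fun t _ => ((hderiv t).differentiableAt).differentiableWithinAt
    · intro t ht
      rw [interior_Icc] at ht
      rw [(hderiv t).deriv]
      have hb : (inner ℝ (f' (b₀ + t • v) - f' b₀) v : ℝ) ≥ -(τ⁻¹ * t * ‖v‖ ^ 2) := by
        have h1 : -(‖f' (b₀ + t • v) - f' b₀‖ * ‖v‖) ≤ (inner ℝ (f' (b₀ + t • v) - f' b₀) v : ℝ) := by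
          have := abs_real_inner_le_norm (f' (b₀ + t • v) - f' b₀) v
          cases abs_le.mp this with
          | intro h _ => linarith
        have h2 : ‖f' (b₀ + t • v) - f' b₀‖ ≤ τ⁻¹ * (t * ‖v‖) := by
          have := hlip (b₀ + t • v) b₀
          simpa [norm_smul, abs_of_pos ht.1] using this
        nlinarith [norm_nonneg v, ht.1.le, inv_nonneg.mpr hτ.le]
      have : (inner ℝ (f' (b₀ + t • v) - f' b₀) v : ℝ)
          = (inner ℝ (f' (b₀ + t • v)) v : ℝ) - (inner ℝ (f' b₀) v : ℝ) := by
        rw [inner_sub_left]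
      linarith [this ▸ hb]
  have h01 : g 0 ≤ g 1 :=
    hmono (Set.mem_Icc.mpr ⟨le_refl 0, zero_le_one⟩) (Set.mem_Icc.mpr ⟨zero_le_one, le_refl 1⟩)
      zero_le_one
  simp only [hg, zero_smul, add_zero, one_smul, zero_pow, one_pow] at h01
  have hb1 : b₀ + v = b := by rw [hv]; abel
  rw [hb1] at h01
  linarith

theorem scalar_aux (τ lam s r p : ℝ) (hτ : 0 < τ) (hlam : 0 ≤ lam)
    (hs : 0 ≤ s) (hr : 0 ≤ r) (hp : p ≤ s * r)
    (c : ℝ) (hc : c = max (1 - lam * τ / s) 0) :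
    0 ≤ τ⁻¹ * (c * s ^ 2 - p - c * p + r ^ 2)
      - (2 * τ)⁻¹ * (c ^ 2 * s ^ 2 - 2 * (c * p) + r ^ 2)
      - lam * (c * s) + lam * r := by
  have h2 : (0:ℝ) < τ⁻¹ := inv_pos.mpr hτ
  have hinv : (2*τ)⁻¹ = τ⁻¹/2 := by rw [mul_inv]; ring
  rw [hinv]
  rcases eq_or_lt_of_le hs with h0 | hpos
  · have hs0 : s = 0 := h0.symm
    have hp0 : p ≤ 0 := by nlinarith
    rw [hs0]
    nlinarith [mul_nonneg hlam hr, mul_nonneg h2.le (sq_nonneg r),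
      mul_nonneg h2.le (neg_nonneg.mpr hp0)]
  · rcases le_or_gt s (lam * τ) with hle | hgt
    · have hc0 : c = 0 := by
        rw [hc, max_eq_right]
        have : 1 ≤ lam * τ / s := (le_div_iff₀ hpos).mpr (by linarith)
        linarith
      rw [hc0]
      have e1 : τ⁻¹ * p ≤ τ⁻¹ * (s * r) := by
        exact mul_le_mul_of_nonneg_left hp h2.le
      have e2 : τ⁻¹ * (s * r) ≤ lam * r := by
        have h3 : τ⁻¹ * (s * r) ≤ τ⁻¹ * ((lam * τ) * r) := by
          apply mul_le_mul_of_nonneg_left _ h2.le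
          exact mul_le_mul_of_nonneg_right hle hr
        have h4 : τ⁻¹ * ((lam * τ) * r) = lam * r := by
          field_simp
        linarith
      nlinarith [mul_nonneg h2.le (sq_nonneg r)]
    · have hc1 : c = 1 - lam * τ / s := by
        rw [hc, max_eq_left]
        have : lam * τ / s ≤ 1 := (div_le_one hpos).mpr hgt.le
        linarith
      have hcs : c * s = s - lam * τ := by rw [hc1]; field_simp
      have hlameq : lam = (s - c * s) * τ⁻¹ := by
        rw [eq_comm, mul_inv_eq_iff_eq_mul₀ hτ.ne']
        linarith
      have key : 0 ≤ (c*s - r)^2 + 2*(s*r - p) := by nlinarith [sq_nonneg (c*s - r)]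
      have goalid : τ⁻¹ * (c * s ^ 2 - p - c * p + r ^ 2)
          - τ⁻¹/2 * (c ^ 2 * s ^ 2 - 2 * (c * p) + r ^ 2)
          - lam * (c * s) + lam * r
          = τ⁻¹/2 * ((c*s - r)^2 + 2*(s*r - p)) := by
        rw [hlameq]; ring
      rw [goalid]
      exact mul_nonneg (by positivity) key

/-- If `f` has a `τ⁻¹`-Lipschitz gradient `f'`, then
(i) the quadratic `b ↦ f b₀ + ⟪f' b₀, b - b₀⟫ - (2τ)⁻¹‖b - b₀‖²` minorizes `f`,
and (ii) the proximal-gradient update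
`b⁺ = max (1 - λτ/‖u‖) 0 • u` with `u = b₀ + τ • f' b₀`
does not decrease the penalized objective `f b - λ‖b‖`. -/
theorem prox_gradient_ascent
    (d : ℕ) (τ lam : ℝ) (hτ : 0 < τ) (hlam : 0 ≤ lam)
    (f : EuclideanSpace ℝ (Fin d) → ℝ)
    (f' : EuclideanSpace ℝ (Fin d) → EuclideanSpace ℝ (Fin d))
    (hf : ∀ x, HasGradientAt f (f' x) x)
    (hlip : ∀ x y, ‖f' x - f' y‖ ≤ τ⁻¹ * ‖x - y‖)
    (b₀ : EuclideanSpace ℝ (Fin d)) :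
    (∀ b : EuclideanSpace ℝ (Fin d),
      f b₀ + (inner ℝ (f' b₀) (b - b₀) : ℝ) - (2 * τ)⁻¹ * ‖b - b₀‖ ^ 2 ≤ f b) ∧
    (f b₀ - lam * ‖b₀‖ ≤
      f (max (1 - lam * τ / ‖b₀ + τ • f' b₀‖) 0 • (b₀ + τ • f' b₀)) -
        lam * ‖max (1 - lam * τ / ‖b₀ + τ • f' b₀‖) 0 • (b₀ + τ • f' b₀)‖) := by
  refine ⟨fun b => descent_lemma_aux d τ hτ f f' hf hlip b₀ b, ?_⟩
  set u : EuclideanSpace ℝ (Fin d) := b₀ + τ • f' b₀ with hu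
  set c : ℝ := max (1 - lam * τ / ‖u‖) 0 with hcdef
  have hc0 : 0 ≤ c := le_max_right _ _
  have hkey := descent_lemma_aux d τ hτ f f' hf hlip b₀ (c • u)
  -- express f' b₀ in terms of u
  have hub : u - b₀ = τ • f' b₀ := by rw [hu]; abel
  have hf'b : f' b₀ = τ⁻¹ • (u - b₀) := by
    rw [hub, smul_smul, inv_mul_cancel₀ hτ.ne', one_smul]
  set s : ℝ := ‖u‖ with hs
  set r : ℝ := ‖b₀‖ with hr
  set p : ℝ := (inner ℝ u b₀ : ℝ) with hp
  have hI : (inner ℝ (f' b₀) (c • u - b₀) : ℝ)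
      = τ⁻¹ * (c * s ^ 2 - p - c * p + r ^ 2) := by
    rw [hf'b, real_inner_smul_left]
    congr 1
    simp only [inner_sub_left, inner_sub_right, real_inner_smul_right,
      real_inner_self_eq_norm_sq, real_inner_comm b₀ u]
    rw [hp, hs, hr, real_inner_comm b₀ u]
    ring
  have hN : ‖c • u - b₀‖ ^ 2 = c ^ 2 * s ^ 2 - 2 * (c * p) + r ^ 2 := by
    rw [@norm_sub_sq_real, norm_smul, real_inner_smul_left]
    rw [Real.norm_eq_abs, abs_of_nonneg hc0]
    ring
  have hn : ‖c • u‖ = c * s := by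
    rw [norm_smul, Real.norm_eq_abs, abs_of_nonneg hc0]
  have hscalar := scalar_aux τ lam s r p hτ hlam (norm_nonneg u) (norm_nonneg b₀)
    (real_inner_le_norm u b₀) c hcdef
  rw [hI, hN] at hkey
  rw [hn]
  linarith
end

section
/- Let p ≥ 1, c ≥ 1 and B : Matrix (Fin p) (Fin c) ℝ. For a : Fin p → ℝ let B^a denote the matrix with entries (B^a)_{j k} = B_{j k} + a_j (adding a common vector a to every column, which leaves the multinomial logistic probabilities unchanged). Then the function a ↦ Σ_{j∈Fin p} ‖row_j(B^a)‖₂ (sum of Euclidean norms of the rows) has the unique minimizer a*_j = −c⁻¹ Σ_{k∈Fin c} B_{j k}, so the row-centered (sum-to-zero) representative uniquely minimizes the group-lasso penalty over the equivalence class {B^a : a ∈ ℝ^p}. Moreover, if the j-th row of B is constant across categories (B_{j k} = B_{j k'} for all k, k'), then the j-th row of B^{a*} is identically zero. -/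
private lemma sum_sq_expand (c : ℕ) (x : Fin c → ℝ) (t : ℝ) :
    ∑ k, (x k + t) ^ 2 = (∑ k, (x k) ^ 2) + 2 * t * (∑ k, x k) + c * t ^ 2 := by
  have h : ∀ k : Fin c, (x k + t) ^ 2 = (x k) ^ 2 + (2 * t) * x k + t ^ 2 := fun k => by ring
  simp_rw [h, Finset.sum_add_distrib, ← Finset.mul_sum, Finset.sum_const, Finset.card_fin,
    nsmul_eq_mul]

private lemma sum_sq_decomp (c : ℕ) (hc : 1 ≤ c) (x : Fin c → ℝ) (t : ℝ) :
    ∑ k, (x k + t) ^ 2 =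
      (∑ k, (x k + (-(c : ℝ)⁻¹ * ∑ k', x k')) ^ 2)
        + c * (t + (c : ℝ)⁻¹ * ∑ k', x k') ^ 2 := by
  have hc0 : (c : ℝ) ≠ 0 := by positivity
  rw [sum_sq_expand, sum_sq_expand]
  field_simp
  ring

/-- Over the equivalence class `{B^a : a ∈ ℝ^p}` obtained by
adding a common vector `a` to every column of `B` (which leaves multinomial
logistic probabilities unchanged), the group-lasso penalty
`a ↦ ∑ j, ‖row_j (B^a)‖₂` is uniquely minimized at
`a* j = -c⁻¹ ∑ k, B j k` (the row-centered, sum-to-zero representative).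
Moreover, a row of `B` that is constant across categories becomes identically
zero after centering. -/
theorem row_centering_minimizes_group_lasso
    (p c : ℕ) (hp : 1 ≤ p) (hc : 1 ≤ c) (B : Matrix (Fin p) (Fin c) ℝ) :
    (∀ a : Fin p → ℝ,
      (∑ j, Real.sqrt (∑ k, (B j k + (-(c : ℝ)⁻¹ * ∑ k', B j k')) ^ 2) ≤
        ∑ j, Real.sqrt (∑ k, (B j k + a j) ^ 2)) ∧
      ((∑ j, Real.sqrt (∑ k, (B j k + a j) ^ 2) =
        ∑ j, Real.sqrt (∑ k, (B j k + (-(c : ℝ)⁻¹ * ∑ k', B j k')) ^ 2)) →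
          a = fun j => -(c : ℝ)⁻¹ * ∑ k', B j k')) ∧
    (∀ j : Fin p, (∀ k k' : Fin c, B j k = B j k') →
      ∀ k, B j k + (-(c : ℝ)⁻¹ * ∑ k', B j k') = 0) := by
  have hc0 : (0 : ℝ) < c := by exact_mod_cast hc
  set m : Fin p → ℝ := fun j => -(c : ℝ)⁻¹ * ∑ k', B j k' with hm
  have hnn : ∀ j, 0 ≤ ∑ k, (B j k + m j) ^ 2 := fun j => by positivity
  have hle : ∀ j (t : ℝ), ∑ k, (B j k + m j) ^ 2 ≤ ∑ k, (B j k + t) ^ 2 := by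
    intro j t
    rw [sum_sq_decomp c hc (fun k => B j k) t]
    have : 0 ≤ (c : ℝ) * (t + (c : ℝ)⁻¹ * ∑ k', B j k') ^ 2 := by positivity
    have hmj : m j = -(c : ℝ)⁻¹ * ∑ k', B j k' := rfl
    rw [hmj]
    linarith
  have hlt : ∀ j (t : ℝ), t ≠ m j →
      ∑ k, (B j k + m j) ^ 2 < ∑ k, (B j k + t) ^ 2 := by
    intro j t ht
    rw [sum_sq_decomp c hc (fun k => B j k) t]
    have hne : t + (c : ℝ)⁻¹ * ∑ k', B j k' ≠ 0 := by
      intro h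
      apply ht
      have : t = -((c : ℝ)⁻¹ * ∑ k', B j k') := by linarith
      simpa [hm, neg_mul] using this
    have : 0 < (c : ℝ) * (t + (c : ℝ)⁻¹ * ∑ k', B j k') ^ 2 := by positivity
    have hmj : m j = -(c : ℝ)⁻¹ * ∑ k', B j k' := rfl
    rw [hmj]
    linarith
  have hsle : ∀ j (t : ℝ),
      Real.sqrt (∑ k, (B j k + m j) ^ 2) ≤ Real.sqrt (∑ k, (B j k + t) ^ 2) :=
    fun j t => Real.sqrt_le_sqrt (hle j t)
  have hslt : ∀ j (t : ℝ), t ≠ m j →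
      Real.sqrt (∑ k, (B j k + m j) ^ 2) < Real.sqrt (∑ k, (B j k + t) ^ 2) :=
    fun j t ht => Real.sqrt_lt_sqrt (hnn j) (hlt j t ht)
  refine ⟨fun a => ⟨?_, ?_⟩, ?_⟩
  · exact Finset.sum_le_sum fun j _ => hsle j (a j)
  · intro heq
    by_contra hane
    have : ∃ j, a j ≠ m j := by
      by_contra h
      push_neg at h
      exact hane (funext h)
    obtain ⟨j0, hj0⟩ := this
    have hstrict : ∑ j, Real.sqrt (∑ k, (B j k + m j) ^ 2) <
        ∑ j, Real.sqrt (∑ k, (B j k + a j) ^ 2) :=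
      Finset.sum_lt_sum (fun j _ => hsle j (a j))
        ⟨j0, Finset.mem_univ j0, hslt j0 (a j0) hj0⟩
    linarith [heq]
  · intro j hconst k
    have hsum : ∑ k', B j k' = c * B j k := by
      rw [Finset.sum_congr rfl (fun k' _ => hconst k' k)]
      simp [Finset.sum_const, mul_comm]
    rw [hsum]
    field_simp
    ring
end

section
/- (Cone condition for the group-lasso penalized minimizer.) Let p, q ≥ 1, let f : Matrix (Fin p) (Fin q) ℝ → ℝ be convex, let B† ∈ Matrix (Fin p) (Fin q) ℝ, and let G ∈ Matrix (Fin p) (Fin q) ℝ be a subgradient of f at B†, i.e., f(B) ≥ f(B†) + Σ_{j,k} G_{j k}(B − B†)_{j k} for all B. Let S ⊆ Fin p be such that row_j(B†) = 0 for every j ∉ S. Let λ > 0 satisfy max_{j∈Fin p} ‖row_j(G)‖₂ ≤ λ/2, and let B̂ be a global minimizer of B ↦ f(B) + λ Σ_{j∈Fin p} ‖row_j(B)‖₂. Then the error Δ = B̂ − B† satisfies Σ_{j∉S} ‖row_j(Δ)‖₂ ≤ 3 Σ_{j∈S} ‖row_j(Δ)‖₂. -/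
private lemma rn_tri {q : ℕ} (a b : Fin q → ℝ) :
    Real.sqrt (∑ k, a k ^ 2) ≤
      Real.sqrt (∑ k, (a k - b k) ^ 2) + Real.sqrt (∑ k, b k ^ 2) := by
  have h := norm_add_le ((WithLp.equiv 2 (Fin q → ℝ)).symm (a - b))
    ((WithLp.equiv 2 (Fin q → ℝ)).symm b)
  simp only [EuclideanSpace.norm_eq, WithLp.equiv_symm_apply, PiLp.toLp_apply] at h
  have e : (WithLp.equiv 2 (Fin q → ℝ)).symm (a - b) +
      (WithLp.equiv 2 (Fin q → ℝ)).symm b = (WithLp.equiv 2 (Fin q → ℝ)).symm a := by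
    simp [map_sub]
  simp only [WithLp.equiv_symm_apply] at e
  rw [e] at h
  simp only [EuclideanSpace.norm_eq, WithLp.equiv_symm_apply, PiLp.toLp_apply] at h
  simpa [Real.norm_eq_abs, sq_abs, Pi.sub_apply] using h

/-- Cone condition for the group-lasso penalized minimizer:
if `G` is a subgradient of the convex function `f` at `B†`, the rows of `B†`
outside `S` vanish, `max_j ‖row_j G‖₂ ≤ λ/2`, and `B̂` globally minimizes
`f(B) + λ ∑ j ‖row_j B‖₂`, then the error `Δ = B̂ - B†` lies in the cone
`‖Δ_{Sᶜ,:}‖_{1,2} ≤ 3 ‖Δ_{S,:}‖_{1,2}`. -/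
theorem group_lasso_cone_condition
    (p q : ℕ) (hp : 1 ≤ p) (hq : 1 ≤ q)
    (f : Matrix (Fin p) (Fin q) ℝ → ℝ)
    (hf : ConvexOn ℝ Set.univ f)
    (Bdag G : Matrix (Fin p) (Fin q) ℝ)
    (hsub : ∀ B : Matrix (Fin p) (Fin q) ℝ,
      f Bdag + ∑ j, ∑ k, G j k * (B j k - Bdag j k) ≤ f B)
    (S : Finset (Fin p))
    (hS : ∀ j ∉ S, ∀ k, Bdag j k = 0)
    (lam : ℝ) (hlam : 0 < lam)
    (hG : ∀ j, Real.sqrt (∑ k, G j k ^ 2) ≤ lam / 2)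
    (Bhat : Matrix (Fin p) (Fin q) ℝ)
    (hmin : ∀ B : Matrix (Fin p) (Fin q) ℝ,
      f Bhat + lam * ∑ j, Real.sqrt (∑ k, Bhat j k ^ 2) ≤
        f B + lam * ∑ j, Real.sqrt (∑ k, B j k ^ 2)) :
    ∑ j ∈ Sᶜ, Real.sqrt (∑ k, (Bhat j k - Bdag j k) ^ 2) ≤
      3 * ∑ j ∈ S, Real.sqrt (∑ k, (Bhat j k - Bdag j k) ^ 2) := by
  classical
  set D : ℝ := ∑ j ∈ S, Real.sqrt (∑ k, (Bhat j k - Bdag j k) ^ 2) with hD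
  set Dc : ℝ := ∑ j ∈ Sᶜ, Real.sqrt (∑ k, (Bhat j k - Bdag j k) ^ 2) with hDc
  -- subgradient bound: f Bdag - f Bhat ≤ (lam/2) * (D + Dc)
  have hcs : ∀ j, ∑ k, G j k * (Bhat j k - Bdag j k) ≥
      -(lam / 2) * Real.sqrt (∑ k, (Bhat j k - Bdag j k) ^ 2) := by
    intro j
    have h1 : ∑ k, (fun k => -G j k) k * (Bhat j k - Bdag j k) ≤
        Real.sqrt (∑ k, (fun k => -G j k) k ^ 2) *
          Real.sqrt (∑ k, (Bhat j k - Bdag j k) ^ 2) :=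
      Real.sum_mul_le_sqrt_mul_sqrt _ _ _
    simp only [neg_mul, Finset.sum_neg_distrib, neg_sq] at h1
    have h2 := mul_le_mul_of_nonneg_right (hG j) (Real.sqrt_nonneg
      (∑ k, (Bhat j k - Bdag j k) ^ 2))
    nlinarith [h1, h2]
  have hsum : ∑ j, ∑ k, G j k * (Bhat j k - Bdag j k) ≥
      -(lam / 2) * (D + Dc) := by
    have : ∑ j, ∑ k, G j k * (Bhat j k - Bdag j k) ≥
        ∑ j, (-(lam / 2) * Real.sqrt (∑ k, (Bhat j k - Bdag j k) ^ 2)) :=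
      Finset.sum_le_sum fun j _ => hcs j
    calc -(lam / 2) * (D + Dc)
        = ∑ j, (-(lam / 2) * Real.sqrt (∑ k, (Bhat j k - Bdag j k) ^ 2)) := by
          rw [← Finset.mul_sum, hD, hDc, Finset.sum_add_sum_compl]
      _ ≤ _ := this
  have hsg := hsub Bhat
  have hm := hmin Bdag
  -- key: lam * ∑ rn Bhat ≤ lam * ∑ rn Bdag + (lam/2) * (D + Dc)
  have key : lam * ∑ j, Real.sqrt (∑ k, Bhat j k ^ 2) ≤
      lam * ∑ j, Real.sqrt (∑ k, Bdag j k ^ 2) + (lam / 2) * (D + Dc) := by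
    linarith
  -- split sums over S and Sᶜ
  have split1 : ∑ j, Real.sqrt (∑ k, Bhat j k ^ 2) =
      (∑ j ∈ S, Real.sqrt (∑ k, Bhat j k ^ 2)) +
        ∑ j ∈ Sᶜ, Real.sqrt (∑ k, Bhat j k ^ 2) :=
    (Finset.sum_add_sum_compl S _).symm
  have split2 : ∑ j, Real.sqrt (∑ k, Bdag j k ^ 2) =
      ∑ j ∈ S, Real.sqrt (∑ k, Bdag j k ^ 2) := by
    rw [← Finset.sum_add_sum_compl S (fun j => Real.sqrt (∑ k, Bdag j k ^ 2))]
    have : ∑ j ∈ Sᶜ, Real.sqrt (∑ k, Bdag j k ^ 2) = 0 := by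
      apply Finset.sum_eq_zero
      intro j hj
      rw [Finset.mem_compl] at hj
      simp [hS j hj]
    rw [this, add_zero]
  have hout : ∑ j ∈ Sᶜ, Real.sqrt (∑ k, Bhat j k ^ 2) = Dc := by
    rw [hDc]
    apply Finset.sum_congr rfl
    intro j hj
    rw [Finset.mem_compl] at hj
    congr 1
    apply Finset.sum_congr rfl
    intro k _
    rw [hS j hj]
    ring
  -- on S: rn Bdag j ≤ rn Bhat j + rn Δ j
  have hin : ∑ j ∈ S, Real.sqrt (∑ k, Bdag j k ^ 2) ≤
      (∑ j ∈ S, Real.sqrt (∑ k, Bhat j k ^ 2)) + D := by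
    rw [hD, ← Finset.sum_add_distrib]
    apply Finset.sum_le_sum
    intro j _
    have := rn_tri (Bdag j) (Bhat j)
    have e : ∀ k, (Bdag j k - Bhat j k) ^ 2 = (Bhat j k - Bdag j k) ^ 2 := by
      intro k; ring
    simp only [e] at this
    linarith [this]
  rw [split1, split2, hout] at key
  have hDnn : 0 ≤ D := Finset.sum_nonneg fun j _ => Real.sqrt_nonneg _
  nlinarith [key, hin, hlam]
end
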